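/- Fix j ∈ {0,…,m−1} and N ≥ 2. Then the fixed-point attempt probability p_0 ↦ τ(j;p_0) is continuous and strictly increasing on [0,1]. -/

import Mathlib

open Finset

/-- `α_j(c) = (1-c) ∑_{i=j}^m 2^i c^{i-j} + 2^m c^{m-j}`. -/
noncomputable def alphaB (m j : ℕ) (c : ℝ) : ℝ :=
  (1 - c) * ∑ i ∈ Finset.Icc j m, (2 : ℝ) ^ i * c ^ (i - j) + (2 : ℝ) ^ m * c ^ (m - j)

/-- `κ_0 = 2 / CW_min`. -/
noncomputable def kappa0 (CWmin : ℕ) : ℝ := 2 / (CWmin : ℝ)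

/-- A reset distribution `q = (q_0, …, q_m)`. -/
def IsResetDist (m : ℕ) (q : Fin (m + 1) → ℝ) : Prop :=
  (∀ j, 0 ≤ q j) ∧ (∑ j, q j) = 1

/-- Conditional attempt probability `τ̂_c(q) = κ_0 / ∑_j q_j α_j(c)`. -/
noncomputable def tauHatC (m CWmin : ℕ) (q : Fin (m + 1) → ℝ) (c : ℝ) : ℝ :=
  kappa0 CWmin / ∑ j : Fin (m + 1), q j * alphaB m (j : ℕ) c

/-- RandomReset(j; p₀) conditional attempt probability
`τ_c(j;p₀) = κ_0 / (p₀ α_j(c) + ((1-p₀)/(m-j)) ∑_{i=j+1}^m α_i(c))`. -/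
noncomputable def tauRRC (m CWmin : ℕ) (j : ℕ) (p0 c : ℝ) : ℝ :=
  kappa0 CWmin /
    (p0 * alphaB m j c + ((1 - p0) / ((m : ℝ) - (j : ℝ))) * ∑ i ∈ Finset.Icc (j + 1) m, alphaB m i c)

/-- `τ ∈ [0,1]` is the fixed-point attempt probability `τ̂(q)` of the reset distribution `q`
for `N` nodes: `τ = τ̂_{1-(1-τ)^(N-1)}(q)`. -/
def IsFixedPointQ (m CWmin N : ℕ) (q : Fin (m + 1) → ℝ) (τ : ℝ) : Prop :=
  τ ∈ Set.Icc (0 : ℝ) 1 ∧ τ = tauHatC m CWmin q (1 - (1 - τ) ^ (N - 1))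

/-- `τ ∈ [0,1]` is the fixed-point attempt probability `τ(j;p₀)` of the RandomReset(j;p₀)
policy for `N` nodes: `τ = τ_{1-(1-τ)^(N-1)}(j;p₀)`. -/
def IsFixedPointRR (m CWmin N : ℕ) (j : ℕ) (p0 τ : ℝ) : Prop :=
  τ ∈ Set.Icc (0 : ℝ) 1 ∧ τ = tauRRC m CWmin j p0 (1 - (1 - τ) ^ (N - 1))


/-!
Write `c(τ) = 1 - (1 - τ)^(N-1)` and `α(p, c) = p α_j(c) + (1 - p) · mean_{i > j} α_i(c)`,
so that `τ(j;p)` is the solution of `τ · α(p, c(τ)) = κ₀` with `0 < τ < 1`.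
Since `α_j < α_i` for `i > j` and `c < 1`, `α(p, c)` is strictly decreasing in `p`, while
`τ ↦ τ · α_i(c(τ))` is strictly increasing for every `i`: where `α_i` decreases, the derivative
bound `(c α_i)' ≥ 2^i (1 - c)` and the concavity estimate `τ c'(τ) ≤ c(τ)` keep the product
increasing. Comparing the fixed-point equations at `p < p'` gives strict monotonicity; the
intermediate value theorem in `p` shows that the image of `[0,1]` is the interval
`[τ(j;0), τ(j;1)]`, and a monotone map of an interval onto an interval is continuous.
-/

open scoped BigOperators

theorem MonotoneOn.continuousOn_of_surjOn_Icc {α β : Type*} [LinearOrder α]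
    [TopologicalSpace α] [OrderTopology α] [LinearOrder β] [TopologicalSpace β] [OrderTopology β]
    [DenselyOrdered β]
    {f : α → β} {a b : α} (hf : MonotoneOn f (Set.Icc a b))
    (hs : Set.SurjOn f (Set.Icc a b) (Set.Icc (f a) (f b))) : ContinuousOn f (Set.Icc a b) := by
  let g : Set.Icc a b → Set.Icc (f a) (f b) := fun x =>
    ⟨f x, hf ⟨le_rfl, x.2.1.trans x.2.2⟩ x.2 x.2.1, hf x.2 ⟨x.2.1.trans x.2.2, le_rfl⟩ x.2.2⟩
  have hg : Continuous g := by
    refine Monotone.continuous_of_surjective (fun x y hxy => hf x.2 y.2 hxy) fun y => ?_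
    obtain ⟨x, hx, hxy⟩ := hs y.2
    exact ⟨⟨x, hx⟩, Subtype.ext hxy⟩
  exact continuousOn_iff_continuous_domRestrict.2 (continuous_subtype_val.comp hg)

section alphaB

variable {m j : ℕ} {c : ℝ}

lemma alphaB_self (m : ℕ) (c : ℝ) : alphaB m m c = 2 ^ m * (2 - c) := by
  simp [alphaB]
  ring

lemma alphaB_of_lt (h : j < m) (c : ℝ) :
    alphaB m j c = (1 - c) * 2 ^ j + c * alphaB m (j + 1) c := by
  have hIcc : Icc j m = insert j (Icc (j + 1) m) := by
    ext i; simp only [mem_Icc, mem_insert]; omega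
  have hshift : ∀ i ∈ Icc (j + 1) m,
      (2 : ℝ) ^ i * c ^ (i - j) = c * (2 ^ i * c ^ (i - (j + 1))) := by
    intro i hi
    rw [mem_Icc] at hi
    rw [show i - j = i - (j + 1) + 1 by omega, pow_succ]
    ring
  rw [alphaB, alphaB, hIcc, sum_insert (by simp), sum_congr rfl hshift, ← mul_sum,
    show m - j = m - (j + 1) + 1 by omega, pow_succ, Nat.sub_self, pow_zero]
  ring

lemma alphaB_one (m j : ℕ) : alphaB m j 1 = 2 ^ m := by
  simp [alphaB]

lemma continuous_alphaB (m j : ℕ) : Continuous (alphaB m j) := by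
  unfold alphaB
  fun_prop

lemma two_pow_le_alphaB (hc0 : 0 ≤ c) (hc1 : c ≤ 1) (hj : j ≤ m) : 2 ^ j ≤ alphaB m j c := by
  induction hj using Nat.decreasingInduction with
  | self =>
    rw [alphaB_self]
    nlinarith [pow_pos (two_pos : (0 : ℝ) < 2) m]
  | of_succ k hk ih =>
    rw [alphaB_of_lt hk, pow_succ] at *
    nlinarith [pow_pos (two_pos : (0 : ℝ) < 2) k]

lemma alphaB_lt_alphaB_succ (hc0 : 0 ≤ c) (hc1 : c < 1) (h : j < m) :
    alphaB m j c < alphaB m (j + 1) c := by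
  have := two_pow_le_alphaB hc0 hc1.le h
  rw [alphaB_of_lt h, pow_succ] at *
  nlinarith [pow_pos (two_pos : (0 : ℝ) < 2) j]

lemma alphaB_lt_alphaB {i : ℕ} (hc0 : 0 ≤ c) (hc1 : c < 1) (hji : j < i) (him : i ≤ m) :
    alphaB m j c < alphaB m i c := by
  induction i, hji using Nat.le_induction with
  | base => exact alphaB_lt_alphaB_succ hc0 hc1 him
  | succ i hi ih => exact (ih (by omega)).trans (alphaB_lt_alphaB_succ hc0 hc1 him)

lemma exists_hasDerivAt_alphaB (hc0 : 0 ≤ c) (hc1 : c ≤ 1) (hj : j ≤ m) :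
    ∃ d, HasDerivAt (alphaB m j) d c ∧ 2 ^ j * (1 - c) ≤ alphaB m j c + c * d := by
  induction hj using Nat.decreasingInduction with
  | self =>
    refine ⟨-2 ^ m, ?_, ?_⟩
    · rw [show alphaB m m = fun x => 2 ^ m * (2 - x) from funext (alphaB_self m)]
      simpa using ((hasDerivAt_id c).const_sub 2).const_mul ((2 : ℝ) ^ m)
    · rw [alphaB_self]
      nlinarith [pow_pos (two_pos : (0 : ℝ) < 2) m]
  | of_succ k hk ih =>
    obtain ⟨d, hd, hbound⟩ := ih
    have hα := two_pow_le_alphaB hc0 hc1 hk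
    refine ⟨-2 ^ k + (alphaB m (k + 1) c + c * d), ?_, ?_⟩
    · rw [show alphaB m k = fun x => (1 - x) * 2 ^ k + x * alphaB m (k + 1) x
        from funext (alphaB_of_lt hk)]
      exact ((((hasDerivAt_id c).const_sub 1).mul_const _).add
        ((hasDerivAt_id c).mul hd)).congr_deriv (by simp)
    · rw [alphaB_of_lt hk]
      rw [pow_succ] at hα hbound
      nlinarith [pow_pos (two_pos : (0 : ℝ) < 2) k, mul_le_mul_of_nonneg_left hbound hc0,
        mul_le_mul_of_nonneg_left hα hc0, mul_nonneg (mul_nonneg hc0 hc0) (pow_pos two_pos k).le]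

end alphaB

section collisionProb

/-- Collision probability `1 - (1 - τ)^n` seen by a node when each of `n` others attempts
with probability `τ`. -/
def collisionProb (n : ℕ) (τ : ℝ) : ℝ := 1 - (1 - τ) ^ n

variable {n : ℕ} {τ : ℝ}

lemma collisionProb_mem_Icc (hτ0 : 0 ≤ τ) (hτ1 : τ ≤ 1) : collisionProb n τ ∈ Set.Icc 0 1 := by
  have := pow_le_one₀ (n := n) (sub_nonneg.2 hτ1) (by linarith)
  have := pow_nonneg (sub_nonneg.2 hτ1) n
  constructor <;> unfold collisionProb <;> linarith

lemma collisionProb_lt_one (hτ : τ < 1) : collisionProb n τ < 1 := by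
  have := pow_pos (sub_pos.2 hτ) n
  unfold collisionProb
  linarith

lemma collisionProb_one (hn : n ≠ 0) : collisionProb n 1 = 1 := by
  simp [collisionProb, hn]

lemma continuous_collisionProb (n : ℕ) : Continuous (collisionProb n) := by
  unfold collisionProb
  fun_prop

lemma hasDerivAt_collisionProb (n : ℕ) (τ : ℝ) :
    HasDerivAt (collisionProb n) (n * (1 - τ) ^ (n - 1)) τ := by
  unfold collisionProb
  simpa using ((hasDerivAt_id τ).const_sub 1).pow n |>.const_sub 1

lemma mul_deriv_collisionProb_le (hτ0 : 0 ≤ τ) (hτ1 : τ ≤ 1) :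
    τ * (n * (1 - τ) ^ (n - 1)) ≤ collisionProb n τ := by
  have hterm : ∀ k ∈ range n, (1 - τ) ^ (n - 1) ≤ (1 - τ) ^ k := fun k hk =>
    pow_le_pow_of_le_one (by linarith) (by linarith) (by simp at hk; omega)
  calc τ * (n * (1 - τ) ^ (n - 1))
      ≤ τ * ∑ k ∈ range n, (1 - τ) ^ k := by
        gcongr
        simpa using card_nsmul_le_sum (range n) _ _ hterm
    _ = collisionProb n τ := by
        rw [collisionProb, ← mul_neg_geom_sum, sub_sub_cancel]

end collisionProb

lemma strictMonoOn_mul_alphaB_collisionProb {m i : ℕ} (n : ℕ) (hi : i ≤ m) :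
    StrictMonoOn (fun τ => τ * alphaB m i (collisionProb n τ)) (Set.Ico 0 1) := by
  refine strictMonoOn_of_deriv_pos (convex_Ico 0 1)
    (by have := continuous_alphaB m i; have := continuous_collisionProb n; fun_prop)
    fun x hx => ?_
  rw [interior_Ico] at hx
  obtain ⟨hc0, hc1⟩ := collisionProb_mem_Icc (n := n) hx.1.le hx.2.le
  obtain ⟨d, hd, hbound⟩ := exists_hasDerivAt_alphaB hc0 hc1 hi
  have hcomp : HasDerivAt (fun τ => alphaB m i (collisionProb n τ))
      (d * (n * (1 - x) ^ (n - 1))) x := hd.comp x (hasDerivAt_collisionProb n x)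
  rw [((hasDerivAt_id' x).fun_mul hcomp).deriv]
  have hc'0 : (0 : ℝ) ≤ n * (1 - x) ^ (n - 1) := by have := hx.2; positivity
  have hxc' := mul_deriv_collisionProb_le (n := n) hx.1.le hx.2.le
  have hclt := collisionProb_lt_one (n := n) hx.2
  have hα := two_pow_le_alphaB hc0 hc1 hi
  have h2i : (0 : ℝ) < 2 ^ i := by positivity
  rw [one_mul]
  rcases le_or_gt 0 d with hd0 | hd0
  · nlinarith [mul_nonneg hx.1.le (mul_nonneg hd0 hc'0)]
  · nlinarith [mul_le_mul_of_nonpos_left hxc' hd0.le]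

/-- The denominator of `tauRRC`: after a success the stage is reset to `j` with probability `p`
and otherwise to a uniformly random stage in `{j+1, …, m}`. -/
noncomputable def alphaRR (m j : ℕ) (p c : ℝ) : ℝ :=
  p * alphaB m j c + (1 - p) * 𝔼 i ∈ Icc (j + 1) m, alphaB m i c

section alphaRR

variable {m j : ℕ} {p c : ℝ}

lemma tauRRC_eq_div_alphaRR (CWmin : ℕ) (hj : j < m) :
    tauRRC m CWmin j p c = kappa0 CWmin / alphaRR m j p c := by
  have hcard : ((Icc (j + 1) m).card : ℝ) = m - j := by
    rw [Nat.card_Icc, Nat.cast_sub (by omega)]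
    push_cast
    ring
  rw [tauRRC, alphaRR, expect_eq_sum_div_card, hcard]
  ring

lemma one_le_alphaRR (hj : j < m) (hp0 : 0 ≤ p) (hp1 : p ≤ 1) (hc0 : 0 ≤ c) (hc1 : c ≤ 1) :
    1 ≤ alphaRR m j p c := by
  have one_le : ∀ i ≤ m, 1 ≤ alphaB m i c := fun i hi =>
    (one_le_pow₀ one_le_two).trans (two_pow_le_alphaB hc0 hc1 hi)
  have hmean : 1 ≤ 𝔼 i ∈ Icc (j + 1) m, alphaB m i c :=
    le_expect (nonempty_Icc.2 hj) fun i hi => one_le i (mem_Icc.1 hi).2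
  have := one_le j hj.le
  unfold alphaRR
  nlinarith

lemma alphaRR_one (hj : j < m) (p : ℝ) : alphaRR m j p 1 = 2 ^ m := by
  simp [alphaRR, alphaB_one, expect_const (nonempty_Icc.2 hj : (Icc (j + 1) m).Nonempty)]
  ring

lemma continuous_alphaRR_left (m j : ℕ) (c : ℝ) : Continuous fun p => alphaRR m j p c := by
  unfold alphaRR
  fun_prop

lemma alphaRR_lt_alphaRR_of_lt {p' : ℝ} (hj : j < m) (hc0 : 0 ≤ c) (hc1 : c < 1)
    (hp : p < p') :
    alphaRR m j p' c < alphaRR m j p c := by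
  have hmean : alphaB m j c < 𝔼 i ∈ Icc (j + 1) m, alphaB m i c :=
    lt_expect
      (fun i hi => (alphaB_lt_alphaB hc0 hc1 (by simp at hi; omega) (mem_Icc.1 hi).2).le)
      ⟨m, by simp; omega, alphaB_lt_alphaB hc0 hc1 hj le_rfl⟩
  unfold alphaRR
  nlinarith

lemma strictMonoOn_mul_alphaRR_collisionProb (n : ℕ) (hj : j < m) (hp0 : 0 ≤ p)
    (hp1 : p ≤ 1) :
    StrictMonoOn (fun τ => τ * alphaRR m j p (collisionProb n τ)) (Set.Ico 0 1) := by
  intro a ha b hb hab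
  have hj' := strictMonoOn_mul_alphaB_collisionProb n hj.le ha hb hab
  have hmean : 𝔼 i ∈ Icc (j + 1) m, a * alphaB m i (collisionProb n a)
      < 𝔼 i ∈ Icc (j + 1) m, b * alphaB m i (collisionProb n b) :=
    expect_lt_expect (fun i hi => (strictMonoOn_mul_alphaB_collisionProb n
        (mem_Icc.1 hi).2 ha hb hab).le)
      ⟨m, by simp; omega, strictMonoOn_mul_alphaB_collisionProb n le_rfl ha hb hab⟩
  have hsplit : ∀ τ, τ * alphaRR m j p (collisionProb n τ) =
      p * (τ * alphaB m j (collisionProb n τ)) +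
        (1 - p) * 𝔼 i ∈ Icc (j + 1) m, τ * alphaB m i (collisionProb n τ) := fun τ => by
    rw [alphaRR, ← mul_expect]
    ring
  simp only [hsplit]
  rcases hp0.eq_or_lt with rfl | hp0
  · simpa using hmean
  · nlinarith [mul_lt_mul_of_pos_left hj' hp0,
      mul_le_mul_of_nonneg_left hmean.le (sub_nonneg.2 hp1)]

end alphaRR

lemma kappa0_pos {CWmin : ℕ} (hCW : 0 < CWmin) : 0 < kappa0 CWmin := by
  unfold kappa0
  positivity

lemma kappa0_le_one {CWmin : ℕ} (hCW : 2 ≤ CWmin) : kappa0 CWmin ≤ 1 := by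
  rw [kappa0, div_le_one (by positivity)]
  exact_mod_cast hCW

namespace IsFixedPointRR

variable {m CWmin N j : ℕ} {p τ : ℝ}

lemma mul_alphaRR_eq (hj : j < m) (hp : p ∈ Set.Icc 0 1) (h : IsFixedPointRR m CWmin N j p τ) :
    τ * alphaRR m j p (collisionProb (N - 1) τ) = kappa0 CWmin := by
  obtain ⟨⟨hτ0, hτ1⟩, hτ⟩ := h
  obtain ⟨hc0, hc1⟩ := collisionProb_mem_Icc (n := N - 1) hτ0 hτ1
  have := one_le_alphaRR hj hp.1 hp.2 hc0 hc1
  have hτ' : τ = kappa0 CWmin / alphaRR m j p (collisionProb (N - 1) τ) :=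
    hτ.trans (tauRRC_eq_div_alphaRR CWmin hj)
  rwa [eq_div_iff (by positivity)] at hτ'

lemma pos (hCW : 0 < CWmin) (hj : j < m) (hp : p ∈ Set.Icc 0 1)
    (h : IsFixedPointRR m CWmin N j p τ) : 0 < τ := by
  obtain ⟨hc0, hc1⟩ := collisionProb_mem_Icc (n := N - 1) h.1.1 h.1.2
  refine pos_of_mul_pos_left ?_ (zero_le_one.trans (one_le_alphaRR hj hp.1 hp.2 hc0 hc1))
  rw [h.mul_alphaRR_eq hj hp]
  exact kappa0_pos hCW

/-- At `τ = 1` every attempt collides and the denominator is `2^m ≥ 2 > κ₀`. -/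
lemma lt_one (hCW : 2 ≤ CWmin) (hN : 2 ≤ N) (hj : j < m) (hp : p ∈ Set.Icc 0 1)
    (h : IsFixedPointRR m CWmin N j p τ) : τ < 1 := by
  refine h.1.2.lt_of_ne fun hτ => ?_
  have heq := h.mul_alphaRR_eq hj hp
  rw [hτ, collisionProb_one (by omega), alphaRR_one hj, one_mul] at heq
  have : (2 : ℝ) ≤ 2 ^ m := le_self_pow₀ one_le_two (by omega)
  linarith [kappa0_le_one hCW]

end IsFixedPointRR

section FixedPointMap

variable {m CWmin N j : ℕ} {T : ℝ → ℝ}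

/-- If `p < p'` and `T p' ≤ T p`, then
`κ₀ = T p' · α(p', ·) < T p' · α(p, ·) ≤ T p · α(p, ·) = κ₀`. -/
lemma strictMonoOn_of_isFixedPointRR (hCW : 2 ≤ CWmin) (hN : 2 ≤ N) (hj : j < m)
    (hT : ∀ p ∈ Set.Icc (0 : ℝ) 1, IsFixedPointRR m CWmin N j p (T p)) :
    StrictMonoOn T (Set.Icc 0 1) := by
  intro p hp p' hp' hpp'
  by_contra! hle
  have hpos := (hT p' hp').pos (by omega) hj hp'
  have hlt := (hT p' hp').lt_one hCW hN hj hp'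
  have hpenalty := alphaRR_lt_alphaRR_of_lt (c := collisionProb (N - 1) (T p')) hj
    (collisionProb_mem_Icc hpos.le hlt.le).1 (collisionProb_lt_one hlt) hpp'
  have hmono := (strictMonoOn_mul_alphaRR_collisionProb (N - 1) hj hp.1 hp.2).monotoneOn
    ⟨hpos.le, hlt⟩ ⟨((hT p hp).pos (by omega) hj hp).le, (hT p hp).lt_one hCW hN hj hp⟩ hle
  have := mul_lt_mul_of_pos_left hpenalty hpos
  linarith [(hT p hp).mul_alphaRR_eq hj hp, (hT p' hp').mul_alphaRR_eq hj hp']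

/-- Given `T 0 ≤ y ≤ T 1`, the intermediate value theorem in `p` solves
`y · α(p, collisionProb y) = κ₀`, and then `T p = y` by injectivity in `τ`. -/
lemma surjOn_of_isFixedPointRR (hCW : 2 ≤ CWmin) (hN : 2 ≤ N) (hj : j < m)
    (hT : ∀ p ∈ Set.Icc (0 : ℝ) 1, IsFixedPointRR m CWmin N j p (T p)) :
    Set.SurjOn T (Set.Icc 0 1) (Set.Icc (T 0) (T 1)) := by
  have h0 : (0 : ℝ) ∈ Set.Icc 0 1 := by simp
  have h1 : (1 : ℝ) ∈ Set.Icc 0 1 := by simp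
  have hIco : ∀ p ∈ Set.Icc (0 : ℝ) 1, T p ∈ Set.Ico 0 1 := fun p hp =>
    ⟨((hT p hp).pos (by omega) hj hp).le, (hT p hp).lt_one hCW hN hj hp⟩
  have Φ_mono := fun p (hp : p ∈ Set.Icc (0 : ℝ) 1) =>
    strictMonoOn_mul_alphaRR_collisionProb (m := m) (N - 1) hj hp.1 hp.2
  intro y ⟨hy0, hy1⟩
  have hy : y ∈ Set.Ico 0 1 := ⟨(hIco 0 h0).1.trans hy0, hy1.trans_lt (hIco 1 h1).2⟩
  have hκ := fun p hp => (hT p hp).mul_alphaRR_eq hj hp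
  have hL0 : kappa0 CWmin ≤ y * alphaRR m j 0 (collisionProb (N - 1) y) :=
    hκ 0 h0 ▸ (Φ_mono 0 h0).monotoneOn (hIco 0 h0) hy hy0
  have hL1 : y * alphaRR m j 1 (collisionProb (N - 1) y) ≤ kappa0 CWmin :=
    hκ 1 h1 ▸ (Φ_mono 1 h1).monotoneOn hy (hIco 1 h1) hy1
  obtain ⟨p, hp, hLp⟩ := intermediate_value_Icc' zero_le_one
    (continuous_const.mul (continuous_alphaRR_left m j (collisionProb (N - 1) y))).continuousOn
    ⟨hL1, hL0⟩
  exact ⟨p, hp, (Φ_mono p hp).injOn (hIco p hp) hy ((hκ p hp).trans hLp.symm)⟩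

end FixedPointMap

theorem fixedPointRR_continuous_strictMono_general (m CWmin N : ℕ) (hCW : 2 ≤ CWmin)
    (hN : 2 ≤ N) (j : ℕ) (hj : j < m) (T : ℝ → ℝ)
    (hT : ∀ p0 ∈ Set.Icc (0 : ℝ) 1, IsFixedPointRR m CWmin N j p0 (T p0)) :
    ContinuousOn T (Set.Icc 0 1) ∧ StrictMonoOn T (Set.Icc 0 1) := by
  have hmono := strictMonoOn_of_isFixedPointRR hCW hN hj hT
  exact ⟨hmono.monotoneOn.continuousOn_of_surjOn_Icc (surjOn_of_isFixedPointRR hCW hN hj hT),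
    hmono⟩

/-- For fixed `j ∈ {0,…,m-1}` and `N ≥ 2`, the fixed-point attempt probability
`p₀ ↦ τ(j;p₀)` (given here as a function `T` satisfying the fixed-point equation) is
continuous and strictly increasing on `[0,1]`. -/
theorem fixedPointRR_continuous_strictMono (m CWmin N : ℕ) (hm : 1 ≤ m) (hCW : 2 ≤ CWmin)
    (hN : 2 ≤ N) (j : ℕ) (hj : j < m) (T : ℝ → ℝ)
    (hT : ∀ p0 ∈ Set.Icc (0 : ℝ) 1, IsFixedPointRR m CWmin N j p0 (T p0)) :
    ContinuousOn T (Set.Icc 0 1) ∧ StrictMonoOn T (Set.Icc 0 1) :=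
  fixedPointRR_continuous_strictMono_general m CWmin N hCW hN j hj T hT
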